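/- arXiv:2012.11603 — 2 statements merged into one kernel-verified Lean document; each statement's English description precedes it below -/
import Mathlib

section
/- Fix M ∈ {2,3,4,6} and h = h_M, let G_space = ℤ² ⋊ ℤ/M be the group with multiplication (r₁,j₁)·(r₂,j₂) = (r₁ + h^{j₁} r₂, j₁ + j₂), let A be an abelian group, and let τ : ℤ² → A be a group homomorphism. Define f_τ((r₁,j₁),(r₂,j₂)) = τ((I + h + ⋯ + h^{j₁−1}) r₂), using the representative j₁ ∈ {0,…,M−1} (empty sum meaning the zero matrix). Then (i) f_τ is an A-valued 2-cocycle on G_space (trivial action), and (ii) f_τ is a 2-coboundary if and only if there exists a group homomorphism χ : ℤ² → A such that τ = χ ∘ (I − h). -/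
open Matrix

noncomputable section

/-- The standard order-`M` rotation matrix on `ℤ²`, for `M ∈ {2,3,4,6}`. -/
def hRot (M : ℕ) : Matrix (Fin 2) (Fin 2) ℤ :=
  if M = 2 then !![-1, 0; 0, -1]
  else if M = 3 then !![0, 1; -1, -1]
  else if M = 4 then !![0, 1; -1, 0]
  else if M = 6 then !![0, 1; -1, 1]
  else 1

/-- The underlying set `ℤ² × ℤ/M` of the space group `ℤ² ⋊ ℤ/M`. -/
abbrev SpaceGrp (M : ℕ) : Type := (Fin 2 → ℤ) × ZMod M

/-- The space group multiplication `(r₁,j₁)·(r₂,j₂) = (r₁ + h^{j₁} r₂, j₁ + j₂)`. -/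
def spaceMul (M : ℕ) (g₁ g₂ : SpaceGrp M) : SpaceGrp M :=
  (g₁.1 + (hRot M ^ (g₁.2).val).mulVec g₂.1, g₁.2 + g₂.2)

/-- The torsion-vector cocycle `f_τ((r₁,j₁),(r₂,j₂)) = τ((I + h + ⋯ + h^{j₁−1}) r₂)`. -/
def fTau (M : ℕ) {A : Type*} [AddCommGroup A] (τ : (Fin 2 → ℤ) →+ A)
    (g₁ g₂ : SpaceGrp M) : A :=
  τ ((∑ k ∈ Finset.range (g₁.2).val, hRot M ^ k).mulVec g₂.1)

/-!
Writing `S j = I + h + ⋯ + h^{j-1}`, the relations `h^M = 1` and `S M = 0` make `S` periodic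
modulo `M`, so `S (j₁ + j₂) = S j₂ + S j₁ h^{j₂}` holds for the residues in `ZMod M`; this twisted
additivity is exactly the cocycle condition for `f_τ`. If `τ = χ ∘ (1 - h)` then
`(1 - h) S j = 1 - h^j` shows `f_τ = d(χ ∘ fst)`. Conversely, a cochain `u` with `f_τ = du`
restricts to a homomorphism `χ = u(·, 0)` on translations, and comparing `du` on two
factorisations of `(h r, 1)` gives `τ r = χ r - χ (h r)`.
-/

open Finset

section GeomSum

variable {R : Type*} [Semiring R]

theorem geom_sum_range_add (x : R) (m n : ℕ) :
    ∑ k ∈ range (m + n), x ^ k = ∑ k ∈ range m, x ^ k + (∑ k ∈ range n, x ^ k) * x ^ m := by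
  rw [sum_range_add, sum_mul]
  congr 1
  exact sum_congr rfl fun k _ => by rw [pow_add, pow_mul_comm]

theorem geom_sum_range_mod {x : R} {M : ℕ} (hpow : x ^ M = 1)
    (hsum : ∑ k ∈ range M, x ^ k = 0) (n : ℕ) :
    ∑ k ∈ range (n % M), x ^ k = ∑ k ∈ range n, x ^ k := by
  rcases M.eq_zero_or_pos with rfl | hM
  · rw [Nat.mod_zero]
  induction n using Nat.strong_induction_on with
  | _ n ih =>
    rcases lt_or_ge n M with hlt | hge
    · rw [Nat.mod_eq_of_lt hlt]
    · obtain ⟨m, rfl⟩ := Nat.exists_eq_add_of_le hge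
      rw [Nat.add_mod_left, ih m (by omega), geom_sum_range_add, hsum, hpow, mul_one, zero_add]

theorem geom_sum_val_add {x : R} {M : ℕ} [NeZero M] (hpow : x ^ M = 1)
    (hsum : ∑ k ∈ range M, x ^ k = 0) (a b : ZMod M) :
    ∑ k ∈ range (a + b).val, x ^ k =
      ∑ k ∈ range b.val, x ^ k + (∑ k ∈ range a.val, x ^ k) * x ^ b.val := by
  rw [ZMod.val_add, geom_sum_range_mod hpow hsum, add_comm, geom_sum_range_add]

end GeomSum

section SpaceGroup

variable {M : ℕ}

theorem eq_two_or_three_or_four_or_six (hM : M ∈ ({2, 3, 4, 6} : Set ℕ)) :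
    M = 2 ∨ M = 3 ∨ M = 4 ∨ M = 6 := by
  simpa using hM

theorem hRot_pow_self (hM : M ∈ ({2, 3, 4, 6} : Set ℕ)) : hRot M ^ M = 1 := by
  rcases eq_two_or_three_or_four_or_six hM with rfl | rfl | rfl | rfl <;> decide

theorem geom_sum_hRot_self (hM : M ∈ ({2, 3, 4, 6} : Set ℕ)) :
    ∑ k ∈ range M, hRot M ^ k = 0 := by
  rcases eq_two_or_three_or_four_or_six hM with rfl | rfl | rfl | rfl <;> decide

variable {A : Type*} [AddCommGroup A] (τ : (Fin 2 → ℤ) →+ A)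

theorem fTau_isCocycle (hM : M ∈ ({2, 3, 4, 6} : Set ℕ)) (g₁ g₂ g₃ : SpaceGrp M) :
    fTau M τ g₂ g₃ - fTau M τ (spaceMul M g₁ g₂) g₃ + fTau M τ g₁ (spaceMul M g₂ g₃) -
      fTau M τ g₁ g₂ = 0 := by
  have : NeZero M := ⟨by rcases eq_two_or_three_or_four_or_six hM with h | h | h | h <;> omega⟩
  simp only [fTau, spaceMul, geom_sum_val_add (hRot_pow_self hM) (geom_sum_hRot_self hM),
    add_mulVec, mulVec_add, mulVec_mulVec, map_add]
  abel

theorem fTau_eq_coboundary_of_eq_comp_one_sub {χ : (Fin 2 → ℤ) →+ A}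
    (hχ : ∀ r, τ r = χ ((1 - hRot M) *ᵥ r)) (g₁ g₂ : SpaceGrp M) :
    fTau M τ g₁ g₂ = χ g₂.1 - χ (spaceMul M g₁ g₂).1 + χ g₁.1 := by
  simp only [fTau, spaceMul, hχ, mulVec_mulVec, mul_neg_geom_sum, sub_mulVec, one_mulVec,
    map_sub, map_add]
  abel

theorem exists_eq_comp_one_sub_of_fTau_eq_coboundary [Fact (1 < M)] {u : SpaceGrp M → A}
    (hu : ∀ g₁ g₂, fTau M τ g₁ g₂ = u g₂ - u (spaceMul M g₁ g₂) + u g₁) :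
    ∃ χ : (Fin 2 → ℤ) →+ A, ∀ r, τ r = χ ((1 - hRot M) *ᵥ r) := by
  have fTau_translation (r : Fin 2 → ℤ) (g : SpaceGrp M) : fTau M τ (r, 0) g = 0 := by
    simp [fTau]
  have u_add (r₁ r₂ : Fin 2 → ℤ) : u (r₁ + r₂, 0) = u (r₁, 0) + u (r₂, 0) := by
    have h := hu (r₁, 0) (r₂, 0)
    simp only [fTau_translation, spaceMul, ZMod.val_zero, pow_zero, one_mulVec, add_zero] at h
    rw [eq_comm, sub_add_eq_add_sub, sub_eq_zero] at h
    rw [← h, add_comm]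
  let χ : (Fin 2 → ℤ) →+ A := AddMonoidHom.mk' (fun r => u (r, 0)) u_add
  refine ⟨χ, fun r => ?_⟩
  -- Both `(0, 1) · (r, 0)` and `(h r, 0) · (0, 1)` equal `(h r, 1)`, while `f_τ` is `τ r` on the
  -- first pair and `0` on the second.
  have rot_then_translate := hu (0, 1) (r, 0)
  have translate_then_rot := hu (hRot M *ᵥ r, 0) (0, 1)
  simp only [fTau, spaceMul, ZMod.val_one, sum_range_one, pow_zero, pow_one,
    one_mulVec, mulVec_zero, map_zero, add_zero, zero_add] at rot_then_translate translate_then_rot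
  calc τ r = u (r, 0) - u (hRot M *ᵥ r, 1) + u (0, 1) := rot_then_translate
    _ = u (r, 0) - u (hRot M *ᵥ r, 0) + (u (0, 1) - u (hRot M *ᵥ r, 1) + u (hRot M *ᵥ r, 0)) := by
      abel
    _ = χ ((1 - hRot M) *ᵥ r) := by
      rw [← translate_then_rot, add_zero, sub_mulVec, one_mulVec, map_sub]
      rfl

end SpaceGroup

/-- `f_τ` is an `A`-valued 2-cocycle on `ℤ² ⋊ ℤ/M`, and it is a coboundary iff
`τ = χ ∘ (I − h)` for some homomorphism `χ : ℤ² → A`. -/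
theorem torsion_vector_cocycle (M : ℕ) (hM : M ∈ ({2, 3, 4, 6} : Set ℕ))
    {A : Type*} [AddCommGroup A] (τ : (Fin 2 → ℤ) →+ A) :
    (∀ g₁ g₂ g₃ : SpaceGrp M,
      fTau M τ g₂ g₃ - fTau M τ (spaceMul M g₁ g₂) g₃ + fTau M τ g₁ (spaceMul M g₂ g₃) -
        fTau M τ g₁ g₂ = 0) ∧
    ((∃ u : SpaceGrp M → A, ∀ g₁ g₂ : SpaceGrp M,
        fTau M τ g₁ g₂ = u g₂ - u (spaceMul M g₁ g₂) + u g₁) ↔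
      ∃ χ : (Fin 2 → ℤ) →+ A, ∀ r : Fin 2 → ℤ, τ r = χ ((1 - hRot M).mulVec r)) := by
  have : Fact (1 < M) :=
    ⟨by rcases eq_two_or_three_or_four_or_six hM with h | h | h | h <;> omega⟩
  exact ⟨fTau_isCocycle τ hM,
    fun ⟨_, hu⟩ => exists_eq_comp_one_sub_of_fTau_eq_coboundary τ hu,
    fun ⟨χ, hχ⟩ => ⟨fun g => χ g.1, fTau_eq_coboundary_of_eq_comp_one_sub τ hχ⟩⟩
end
end

section
/- Fix a real number φ and integers k₁, k₆. Let w(r,r') = x y' for r = (x,y), r' = (x',y'), and suppose λ : (ℤ²)³ → ℝ satisfies λ(r₂,r₃,r₄) − λ(r₁+r₂,r₃,r₄) + λ(r₁,r₂+r₃,r₄) − λ(r₁,r₂,r₃+r₄) + λ(r₁,r₂,r₃) = w(r₁,r₂)·w(r₃,r₄) for all r_i ∈ ℤ². On G = U(1)⋉_φℤ² (Landau gauge), represent U(1)-components by z ∈ [0,1), set F(g₁,g₂) = z₁ + z₂ + φ w(r₁,r₂) − z₁₂ (an integer), and define the 3-cochain f(g₁,g₂,g₃) = k₁·(z₁ F(g₂,g₃)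 + φ w(r₁,r₂) z₃ + φ² λ(r₁,r₂,r₃)) + k₆·(z₁ w(r₂,r₃) + φ λ(r₁,r₂,r₃)). Then the coboundary of f satisfies (df)(g₁,g₂,g₃,g₄) = k₁ F(g₁,g₂) F(g₃,g₄) + k₆ F(g₁,g₂) w(r₃,r₄), which is an integer; consequently f reduced modulo 1 is an (ℝ/ℤ)-valued 3-cocycle on U(1)⋉_φℤ². -/
noncomputable section

/-- The underlying set `(ℝ/ℤ) × ℤ²` of the magnetic translation group. -/
abbrev MagTrans : Type := AddCircle (1 : ℝ) × (Fin 2 → ℤ)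

/-- Landau-gauge magnetic translation multiplication with flux `φ` per unit cell. -/
def magMulL (φ : ℝ) (g₁ g₂ : MagTrans) : MagTrans :=
  (g₁.1 + g₂.1 + (↑(φ * (g₁.2 0 : ℝ) * (g₂.2 1 : ℝ)) : AddCircle (1 : ℝ)), g₁.2 + g₂.2)

/-- The representative in `[0,1)` of an element of `ℝ/ℤ`. -/
def rep1 (z : AddCircle (1 : ℝ)) : ℝ :=
  haveI : Fact ((0 : ℝ) < 1) := ⟨one_pos⟩
  (AddCircle.equivIco 1 0 z : ℝ)

/-- The Landau-gauge area cocycle `w(r,r') = x y'`. -/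
def wL (r r' : Fin 2 → ℤ) : ℤ := r 0 * r' 1

/-- The integral flux cocycle `F(g₁,g₂) = z₁ + z₂ + φ w(r₁,r₂) − z₁₂`. -/
def FI (φ : ℝ) (g₁ g₂ : MagTrans) : ℝ :=
  rep1 g₁.1 + rep1 g₂.1 + φ * (wL g₁.2 g₂.2 : ℝ) - rep1 (magMulL φ g₁ g₂).1

/-- The SPT 3-cochain with integer quantum Hall level `k₁` and filling `k₆`. -/
def sptL (φ : ℝ) (k₁ k₆ : ℤ) (lam : (Fin 2 → ℤ) → (Fin 2 → ℤ) → (Fin 2 → ℤ) → ℝ)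
    (g₁ g₂ g₃ : MagTrans) : ℝ :=
  (k₁ : ℝ) * (rep1 g₁.1 * FI φ g₂ g₃ + φ * (wL g₁.2 g₂.2 : ℝ) * rep1 g₃.1 +
      φ ^ 2 * lam g₁.2 g₂.2 g₃.2) +
    (k₆ : ℝ) * (rep1 g₁.1 * (wL g₂.2 g₃.2 : ℝ) + φ * lam g₁.2 g₂.2 g₃.2)

/-!
Write `z(g) ∈ [0,1)` for the lift of the `U(1)`-coordinate, a real 1-cochain. Then
`dz = F − φ w`, and since `w` is bilinear, `F = dz + φ w` is a 2-cocycle (here associativity of the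
group enters). The Leibniz rule `d(a ∪ b) = da ∪ b ± a ∪ db` for cup products of real cochains gives
`d(z ∪ F + φ w ∪ z + φ² λ) = F ∪ F` and `d(z ∪ w + φ λ) = F ∪ w`, the `φ w ∪ w` terms cancelling
against `dλ = w ∪ w`. Finally `F` is integral because it vanishes modulo `1`.
-/

section Coboundary

variable {G : Type*} (m : G → G → G)

def coboundary₁ {A : Type*} [AddCommGroup A] (a : G → A) (g₁ g₂ : G) : A :=
  a g₂ - a (m g₁ g₂) + a g₁

def coboundary₂ {A : Type*} [AddCommGroup A] (b : G → G → A) (g₁ g₂ g₃ : G) : A :=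
  b g₂ g₃ - b (m g₁ g₂) g₃ + b g₁ (m g₂ g₃) - b g₁ g₂

def coboundary₃ {A : Type*} [AddCommGroup A] (c : G → G → G → A) (g₁ g₂ g₃ g₄ : G) : A :=
  c g₂ g₃ g₄ - c (m g₁ g₂) g₃ g₄ + c g₁ (m g₂ g₃) g₄ - c g₁ g₂ (m g₃ g₄) + c g₁ g₂ g₃

theorem coboundary₂_coboundary₁ {A : Type*} [AddCommGroup A] {a : G → A}
    (h : ∀ g₁ g₂ g₃, a (m (m g₁ g₂) g₃) = a (m g₁ (m g₂ g₃))) (g₁ g₂ g₃ : G) :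
    coboundary₂ m (coboundary₁ m a) g₁ g₂ g₃ = 0 := by
  simp only [coboundary₂, coboundary₁, h]
  abel

theorem map_coboundary₃ {A B : Type*} [AddCommGroup A] [AddCommGroup B] (ψ : A →+ B)
    (c : G → G → G → A) (g₁ g₂ g₃ g₄ : G) :
    coboundary₃ m (fun g₁ g₂ g₃ => ψ (c g₁ g₂ g₃)) g₁ g₂ g₃ g₄ =
      ψ (coboundary₃ m c g₁ g₂ g₃ g₄) := by
  simp only [coboundary₃, map_add, map_sub]

variable {R : Type*} [CommRing R]

theorem coboundary₂_const_mul (r : R) (b : G → G → R) (g₁ g₂ g₃ : G) :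
    coboundary₂ m (fun g₁ g₂ => r * b g₁ g₂) g₁ g₂ g₃ = r * coboundary₂ m b g₁ g₂ g₃ := by
  simp only [coboundary₂]
  ring

theorem coboundary₃_add (c c' : G → G → G → R) (g₁ g₂ g₃ g₄ : G) :
    coboundary₃ m (fun g₁ g₂ g₃ => c g₁ g₂ g₃ + c' g₁ g₂ g₃) g₁ g₂ g₃ g₄ =
      coboundary₃ m c g₁ g₂ g₃ g₄ + coboundary₃ m c' g₁ g₂ g₃ g₄ := by
  simp only [coboundary₃]
  ring

theorem coboundary₃_const_mul (r : R) (c : G → G → G → R) (g₁ g₂ g₃ g₄ : G) :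
    coboundary₃ m (fun g₁ g₂ g₃ => r * c g₁ g₂ g₃) g₁ g₂ g₃ g₄ =
      r * coboundary₃ m c g₁ g₂ g₃ g₄ := by
  simp only [coboundary₃]
  ring

theorem coboundary₃_mul₁₂ (a : G → R) (b : G → G → R) (g₁ g₂ g₃ g₄ : G) :
    coboundary₃ m (fun g₁ g₂ g₃ => a g₁ * b g₂ g₃) g₁ g₂ g₃ g₄ =
      coboundary₁ m a g₁ g₂ * b g₃ g₄ - a g₁ * coboundary₂ m b g₂ g₃ g₄ := by
  simp only [coboundary₃, coboundary₂, coboundary₁]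
  ring

theorem coboundary₃_mul₂₁ (b : G → G → R) (a : G → R) (g₁ g₂ g₃ g₄ : G) :
    coboundary₃ m (fun g₁ g₂ g₃ => b g₁ g₂ * a g₃) g₁ g₂ g₃ g₄ =
      coboundary₂ m b g₁ g₂ g₃ * a g₄ + b g₁ g₂ * coboundary₁ m a g₃ g₄ := by
  simp only [coboundary₃, coboundary₂, coboundary₁]
  ring

end Coboundary

theorem coe_rep1 (z : AddCircle (1 : ℝ)) : ((rep1 z : ℝ) : AddCircle (1 : ℝ)) = z :=
  have : Fact ((0 : ℝ) < 1) := ⟨one_pos⟩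
  (AddCircle.equivIco 1 0).symm_apply_apply z

theorem magMulL_fst_assoc (φ : ℝ) (g₁ g₂ g₃ : MagTrans) :
    (magMulL φ (magMulL φ g₁ g₂) g₃).1 = (magMulL φ g₁ (magMulL φ g₂ g₃)).1 := by
  simp only [magMulL, Pi.add_apply, Int.cast_add, mul_add, add_mul, AddCircle.coe_add]
  abel

theorem exists_FI_eq_intCast (φ : ℝ) (g₁ g₂ : MagTrans) : ∃ n : ℤ, FI φ g₁ g₂ = n := by
  have : Fact ((0 : ℝ) < 1) := ⟨one_pos⟩
  have h : ((FI φ g₁ g₂ : ℝ) : AddCircle (1 : ℝ)) = 0 := by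
    simp only [FI, wL, magMulL, AddCircle.coe_add, AddCircle.coe_sub, coe_rep1,
      Int.cast_mul, mul_assoc]
    abel
  obtain ⟨n, hn⟩ := (AddCircle.coe_eq_zero_iff 1).1 h
  exact ⟨n, by simpa using hn.symm⟩

theorem coboundary₁_rep1 (φ : ℝ) (g₁ g₂ : MagTrans) :
    coboundary₁ (magMulL φ) (fun g => rep1 g.1) g₁ g₂ = FI φ g₁ g₂ - φ * wL g₁.2 g₂.2 := by
  simp only [coboundary₁, FI]
  ring

theorem coboundary₂_wL (φ : ℝ) (g₁ g₂ g₃ : MagTrans) :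
    coboundary₂ (magMulL φ) (fun g h => (wL g.2 h.2 : ℝ)) g₁ g₂ g₃ = 0 := by
  simp only [coboundary₂, magMulL, wL, Pi.add_apply, Int.cast_add, Int.cast_mul]
  ring

theorem coboundary₂_FI (φ : ℝ) (g₁ g₂ g₃ : MagTrans) :
    coboundary₂ (magMulL φ) (FI φ) g₁ g₂ g₃ = 0 := by
  have hz := coboundary₂_coboundary₁ (magMulL φ) (a := fun g => rep1 g.1)
    (fun g₁ g₂ g₃ => by rw [magMulL_fst_assoc]) g₁ g₂ g₃
  have hw := coboundary₂_wL φ g₁ g₂ g₃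
  simp only [coboundary₂, coboundary₁_rep1] at hz hw ⊢
  linear_combination hz + φ * hw

theorem coboundary₃_sptL (φ : ℝ) (k₁ k₆ : ℤ)
    (lam : (Fin 2 → ℤ) → (Fin 2 → ℤ) → (Fin 2 → ℤ) → ℝ)
    (hlam : ∀ r₁ r₂ r₃ r₄ : Fin 2 → ℤ,
      lam r₂ r₃ r₄ - lam (r₁ + r₂) r₃ r₄ + lam r₁ (r₂ + r₃) r₄ - lam r₁ r₂ (r₃ + r₄) +
          lam r₁ r₂ r₃ = (wL r₁ r₂ : ℝ) * (wL r₃ r₄ : ℝ)) (g₁ g₂ g₃ g₄ : MagTrans) :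
    coboundary₃ (magMulL φ) (sptL φ k₁ k₆ lam) g₁ g₂ g₃ g₄ =
      k₁ * FI φ g₁ g₂ * FI φ g₃ g₄ + k₆ * FI φ g₁ g₂ * wL g₃.2 g₄.2 := by
  have hlam' : coboundary₃ (magMulL φ) (fun g₁ g₂ g₃ => lam g₁.2 g₂.2 g₃.2) g₁ g₂ g₃ g₄ =
      wL g₁.2 g₂.2 * wL g₃.2 g₄.2 := hlam _ _ _ _
  unfold sptL
  simp only [coboundary₃_add, coboundary₃_const_mul, coboundary₃_mul₁₂, coboundary₃_mul₂₁,
    coboundary₂_const_mul, hlam', coboundary₂_FI, coboundary₂_wL, coboundary₁_rep1]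
  ring

/-- The coboundary of the SPT 3-cochain is the integral 4-cocycle
`k₁ F(g₁,g₂) F(g₃,g₄) + k₆ F(g₁,g₂) w(r₃,r₄)`; hence the 3-cochain reduced mod 1 is an
`(ℝ/ℤ)`-valued 3-cocycle on the magnetic translation group. -/
theorem magnetic_translation_spt_cocycle (φ : ℝ) (k₁ k₆ : ℤ)
    (lam : (Fin 2 → ℤ) → (Fin 2 → ℤ) → (Fin 2 → ℤ) → ℝ)
    (hlam : ∀ r₁ r₂ r₃ r₄ : Fin 2 → ℤ,
      lam r₂ r₃ r₄ - lam (r₁ + r₂) r₃ r₄ + lam r₁ (r₂ + r₃) r₄ - lam r₁ r₂ (r₃ + r₄) +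
          lam r₁ r₂ r₃ = (wL r₁ r₂ : ℝ) * (wL r₃ r₄ : ℝ)) :
    (∀ g₁ g₂ g₃ g₄ : MagTrans,
      sptL φ k₁ k₆ lam g₂ g₃ g₄ - sptL φ k₁ k₆ lam (magMulL φ g₁ g₂) g₃ g₄ +
          sptL φ k₁ k₆ lam g₁ (magMulL φ g₂ g₃) g₄ - sptL φ k₁ k₆ lam g₁ g₂ (magMulL φ g₃ g₄) +
          sptL φ k₁ k₆ lam g₁ g₂ g₃ =
        (k₁ : ℝ) * FI φ g₁ g₂ * FI φ g₃ g₄ + (k₆ : ℝ) * FI φ g₁ g₂ * (wL g₃.2 g₄.2 : ℝ)) ∧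
    (∀ g₁ g₂ g₃ g₄ : MagTrans, ∃ N : ℤ,
      (k₁ : ℝ) * FI φ g₁ g₂ * FI φ g₃ g₄ + (k₆ : ℝ) * FI φ g₁ g₂ * (wL g₃.2 g₄.2 : ℝ) = N) ∧
    (∀ g₁ g₂ g₃ g₄ : MagTrans,
      (↑(sptL φ k₁ k₆ lam g₂ g₃ g₄) : AddCircle (1 : ℝ)) -
          ↑(sptL φ k₁ k₆ lam (magMulL φ g₁ g₂) g₃ g₄) +
          ↑(sptL φ k₁ k₆ lam g₁ (magMulL φ g₂ g₃) g₄) -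
          ↑(sptL φ k₁ k₆ lam g₁ g₂ (magMulL φ g₃ g₄)) +
          ↑(sptL φ k₁ k₆ lam g₁ g₂ g₃) = 0) := by
  have integral : ∀ g₁ g₂ g₃ g₄ : MagTrans, ∃ N : ℤ,
      (k₁ : ℝ) * FI φ g₁ g₂ * FI φ g₃ g₄ + (k₆ : ℝ) * FI φ g₁ g₂ * (wL g₃.2 g₄.2 : ℝ) = N := by
    intro g₁ g₂ g₃ g₄
    obtain ⟨n, hn⟩ := exists_FI_eq_intCast φ g₁ g₂
    obtain ⟨n', hn'⟩ := exists_FI_eq_intCast φ g₃ g₄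
    exact ⟨k₁ * n * n' + k₆ * n * wL g₃.2 g₄.2, by rw [hn, hn']; push_cast; ring⟩
  refine ⟨coboundary₃_sptL φ k₁ k₆ lam hlam, integral, fun g₁ g₂ g₃ g₄ => ?_⟩
  obtain ⟨N, hN⟩ := integral g₁ g₂ g₃ g₄
  change coboundary₃ (magMulL φ)
    (fun g₁ g₂ g₃ => QuotientAddGroup.mk' _ (sptL φ k₁ k₆ lam g₁ g₂ g₃)) g₁ g₂ g₃ g₄ = 0
  rw [map_coboundary₃, coboundary₃_sptL φ k₁ k₆ lam hlam, hN]
  exact (AddCircle.coe_eq_zero_iff 1).2 ⟨N, by simp⟩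
end
end
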